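/- Let C be a Z2Z4-additive code with Φ(C⊥) = Φ(C)⊥ (as subsets of Z2^{α+2β}). Then Φ(C) is a linear binary code. -/
import Mathlib


open Finset

/-- The ambient mixed alphabet space `Z2^α × Z4^β`. -/
abbrev Amb (α β : ℕ) := (Fin α → ZMod 2) × (Fin β → ZMod 4)

/-- The binary space `Z2^{α+2β}`, represented as `Z2^α × Z2^β × Z2^β`
(binary part, first Gray bits, second Gray bits). -/
abbrev Bin (α β : ℕ) := (Fin α → ZMod 2) × (Fin β → ZMod 2) × (Fin β → ZMod 2)

/-- The `Z4`-valued inner product `[u,v] = 2·Σ u_i v_i + Σ u'_j v'_j`. -/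
def zinner {α β : ℕ} (u v : Amb α β) : ZMod 4 :=
  2 * ∑ i, ((u.1 i).val : ZMod 4) * ((v.1 i).val : ZMod 4) + ∑ j, u.2 j * v.2 j

/-- The dual of a subset of the mixed ambient space. -/
def zdual {α β : ℕ} (C : Set (Amb α β)) : Set (Amb α β) :=
  {v | ∀ u ∈ C, zinner u v = 0}

/-- The vector `2u*v = (0 | 2u'*v')` (componentwise product; doubling kills the binary part). -/
def star2 {α β : ℕ} (u v : Amb α β) : Amb α β :=
  (0, fun j => 2 * u.2 j * v.2 j)

/-- The usual Gray map `Z4 → Z2²`. -/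
def gray (x : ZMod 4) : ZMod 2 × ZMod 2 :=
  match x.val with
  | 0 => (0, 0)
  | 1 => (0, 1)
  | 2 => (1, 1)
  | _ => (1, 0)

/-- The extended Gray map `Φ : Z2^α × Z4^β → Z2^{α+2β}`. -/
def Phi {α β : ℕ} (u : Amb α β) : Bin α β :=
  (u.1, fun j => (gray (u.2 j)).1, fun j => (gray (u.2 j)).2)

/-- The standard binary inner product on `Z2^{α+2β}`. -/
def binner {α β : ℕ} (x y : Bin α β) : ZMod 2 :=
  ∑ i, x.1 i * y.1 i + ∑ j, x.2.1 j * y.2.1 j + ∑ j, x.2.2 j * y.2.2 j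

/-- The dual of a subset of `Z2^{α+2β}`. -/
def bdual {α β : ℕ} (S : Set (Bin α β)) : Set (Bin α β) :=
  {y | ∀ x ∈ S, binner x y = 0}

/-- A subset of `Z2^{α+2β}` is a linear binary code if it is a linear subspace. -/
def IsLinear {α β : ℕ} (S : Set (Bin α β)) : Prop :=
  ∃ M : Submodule (ZMod 2) (Bin α β), ↑M = S

/-- The set `D_C = {2u*v : u ∈ C, v ∈ C⊥}`. -/
def DC {α β : ℕ} (C : Set (Amb α β)) : Set (Amb α β) :=
  {x | ∃ u ∈ C, ∃ v ∈ zdual C, x = star2 u v}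

/-- The standard binary inner product on `Z2^n`. -/
def binner2 {n : ℕ} (u v : Fin n → ZMod 2) : ZMod 2 := ∑ i, u i * v i

/-- The dual of a subset of `Z2^n`. -/
def bdual2 {n : ℕ} (C : Set (Fin n → ZMod 2)) : Set (Fin n → ZMod 2) :=
  {v | ∀ u ∈ C, binner2 u v = 0}

-- ################ auxiliary development ################

/-- The doubling embedding `ZMod 2 →+ ZMod 4`. -/
def embHom : ZMod 2 →+ ZMod 4 :=
  AddMonoidHom.mk' (fun t => 2 * (t.val : ZMod 4)) (by decide)

lemma gray_zero : gray 0 = (0, 0) := rfl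

lemma Phi_zero {α β : ℕ} : Phi (0 : Amb α β) = 0 := by
  unfold Phi
  refine Prod.ext rfl (Prod.ext ?_ ?_) <;> funext j <;> simp [gray_zero]

lemma gray_add : ∀ a b : ZMod 4,
    (gray (a + b + 2 * a * b)).1 = (gray a).1 + (gray b).1 ∧
    (gray (a + b + 2 * a * b)).2 = (gray a).2 + (gray b).2 := by decide

lemma Phi_add {α β : ℕ} (u v : Amb α β) :
    Phi (u + v + star2 u v) = Phi u + Phi v := by
  unfold Phi star2
  refine Prod.ext ?_ (Prod.ext ?_ ?_)
  · simp
  · funext j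
    have := (gray_add (u.2 j) (v.2 j)).1
    simpa using this
  · funext j
    have := (gray_add (u.2 j) (v.2 j)).2
    simpa using this

lemma star2_star2 {α β : ℕ} (x u v : Amb α β) : star2 x (star2 u v) = 0 := by
  unfold star2
  refine Prod.ext rfl ?_
  funext j
  show 2 * x.2 j * (2 * u.2 j * v.2 j) = 0
  have : ∀ a b c : ZMod 4, 2 * a * (2 * b * c) = 0 := by decide
  exact this _ _ _

lemma Phi_sum_eq {α β : ℕ} (u v : Amb α β) :
    Phi (u + v) + Phi (star2 u v) = Phi u + Phi v := by
  have h1 := Phi_add (u + v) (star2 u v)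
  rw [star2_star2, add_zero] at h1
  rw [← h1]; exact Phi_add u v

lemma binner_add_left {α β : ℕ} (x y z : Bin α β) :
    binner (x + y) z = binner x z + binner y z := by
  simp only [binner, Prod.fst_add, Prod.snd_add, Pi.add_apply, add_mul,
    Finset.sum_add_distrib]
  ring

lemma zinner_comm {α β : ℕ} (x y : Amb α β) : zinner x y = zinner y x := by
  unfold zinner
  congr 1
  · congr 1
    exact Finset.sum_congr rfl fun i _ => mul_comm _ _
  · exact Finset.sum_congr rfl fun j _ => mul_comm _ _

lemma key_term : ∀ a y z : ZMod 4,
    a * (2 * y * z) =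
      embHom ((gray (2 * y * z)).1 * (gray a).1 + (gray (2 * y * z)).2 * (gray a).2) := by
  decide

lemma zinner_star2 {α β : ℕ} (w u v : Amb α β) :
    zinner w (star2 u v) = embHom (binner (Phi (star2 u v)) (Phi w)) := by
  unfold zinner binner Phi star2
  simp only [Pi.zero_apply, ZMod.val_zero, Nat.cast_zero, mul_zero, Finset.sum_const_zero,
    zero_mul, Finset.sum_const_zero, zero_add]
  rw [Finset.sum_congr rfl fun j _ => key_term (w.2 j) (u.2 j) (v.2 j), ← map_sum,
    Finset.sum_add_distrib]

-- ############ duality: separation by `ZMod 4`-valued characters ############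

/-- The embedding `ZMod 4 →+ ℚ/ℤ` sending `1` to `1/4`. -/
noncomputable def chi : ZMod 4 →+ AddCircle (1 : ℚ) :=
  ZMod.lift 4 ⟨zmultiplesHom _ (((1 : ℚ)/4 : ℚ) : AddCircle (1 : ℚ)), by
    show (4 : ℤ) • (((1 : ℚ)/4 : ℚ) : AddCircle (1 : ℚ)) = 0
    rw [← AddCircle.coe_zsmul]
    norm_num⟩

lemma chi_int (n : ℤ) : chi (n : ZMod 4) = (((n : ℚ) / 4 : ℚ) : AddCircle (1 : ℚ)) := by
  rw [chi, ZMod.lift_coe]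
  show (n : ℤ) • (((1 : ℚ)/4 : ℚ) : AddCircle (1 : ℚ)) = _
  rw [← AddCircle.coe_zsmul]
  congr 1
  rw [zsmul_eq_mul]
  ring

lemma chi_eq_zero {t : ZMod 4} (h : chi t = 0) : t = 0 := by
  have ht : ((t.val : ℤ) : ZMod 4) = t := by
    rw [Int.cast_natCast]
    exact ZMod.natCast_rightInverse t
  rw [← ht, chi_int] at h
  rw [AddCircle.coe_eq_zero_iff] at h
  obtain ⟨n, hn⟩ := h
  have h4 : (n : ℚ) = (t.val : ℚ) / 4 := by
    push_cast at hn
    simpa [zsmul_eq_mul] using hn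
  have h4' : n * 4 = (t.val : ℤ) := by
    have : (n : ℚ) * 4 = (t.val : ℚ) := by rw [h4]; ring
    exact_mod_cast this
  have hlt : t.val < 4 := ZMod.val_lt t
  have : t.val = 0 := by omega
  rwa [ZMod.val_eq_zero] at this

lemma chi_inj : Function.Injective chi := by
  intro a b hab
  have h0 : chi (a - b) = 0 := by rw [map_sub, hab, sub_self]
  have := chi_eq_zero h0
  rwa [sub_eq_zero] at this

lemma chi_surj_torsion {y : AddCircle (1 : ℚ)} (hy : (4 : ℤ) • y = 0) :
    ∃ t : ZMod 4, chi t = y := by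
  induction y using QuotientAddGroup.induction_on with | H q => ?_
  rw [← AddCircle.coe_zsmul, AddCircle.coe_eq_zero_iff] at hy
  obtain ⟨n, hn⟩ := hy
  refine ⟨(n : ZMod 4), ?_⟩
  rw [chi_int]
  congr 1
  have hq : (4 : ℚ) * q = n := by
    have := hn
    rw [zsmul_eq_mul, zsmul_eq_mul, mul_one] at this
    push_cast at this
    linarith
  field_simp
  linarith

lemma exists_zmod4_hom_ne_zero {Q : Type*} [AddCommGroup Q]
    (tor : ∀ y : Q, (4 : ℤ) • y = 0) {a : Q} (ha : a ≠ 0) :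
    ∃ ψ : Q →+ ZMod 4, ψ a ≠ 0 := by
  obtain ⟨c, hc⟩ := CharacterModule.exists_character_apply_ne_zero_of_ne_zero ha
  have key : ∀ y : Q, ∃ t : ZMod 4, chi t = c y := by
    intro y
    refine chi_surj_torsion ?_
    rw [← map_zsmul c, tor y, map_zero]
  choose t ht using key
  refine ⟨AddMonoidHom.mk' t ?_, ?_⟩
  · intro x y
    apply chi_inj
    rw [ht, map_add chi, ht, ht]
    exact map_add c x y
  · intro h0
    apply hc
    rw [← ht a]
    have h0' : t a = 0 := h0
    rw [h0', map_zero]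

lemma amb_torsion {α β : ℕ} (x : Amb α β) : (4 : ℤ) • x = 0 := by
  refine Prod.ext ?_ ?_
  · funext k
    show (4 : ℤ) • x.1 k = 0
    rw [zsmul_eq_mul]
    rw [show ((4 : ℤ) : ZMod 2) = 0 by decide, zero_mul]
  · funext k
    show (4 : ℤ) • x.2 k = 0
    rw [zsmul_eq_mul]
    rw [show ((4 : ℤ) : ZMod 4) = 0 by decide, zero_mul]

lemma exists_sep {α β : ℕ} (C : AddSubgroup (Amb α β)) {e : Amb α β} (he : e ∉ C) :
    ∃ φ : Amb α β →+ ZMod 4, (∀ x ∈ C, φ x = 0) ∧ φ e ≠ 0 := by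
  have tor : ∀ y : Amb α β ⧸ C, (4 : ℤ) • y = 0 := by
    intro y
    induction y using QuotientAddGroup.induction_on with | H z => ?_
    rw [← QuotientAddGroup.mk_zsmul, amb_torsion]
    rfl
  have ha : (QuotientAddGroup.mk' C) e ≠ 0 := by
    rw [QuotientAddGroup.mk'_apply, Ne, QuotientAddGroup.eq_zero_iff]
    exact he
  obtain ⟨ψ, hψ⟩ := exists_zmod4_hom_ne_zero tor ha
  refine ⟨ψ.comp (QuotientAddGroup.mk' C), ?_, hψ⟩
  intro x hx
  have : (QuotientAddGroup.mk' C) x = 0 := by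
    rw [QuotientAddGroup.mk'_apply, QuotientAddGroup.eq_zero_iff]
    exact hx
  show ψ ((QuotientAddGroup.mk' C) x) = 0
  rw [this, map_zero]

lemma zrepr {α β : ℕ} (φ : Amb α β →+ ZMod 4) :
    ∃ w : Amb α β, ∀ x, zinner x w = φ x := by
  classical
  set εf : Fin α → Amb α β := fun i => (Pi.single i 1, 0) with hεf
  set ff : Fin β → Amb α β := fun j => (0, Pi.single j 1) with hff
  have hφε2 : ∀ i, φ (εf i) = 0 ∨ φ (εf i) = 2 := by
    intro i
    have h2ε : εf i + εf i = 0 := by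
      rw [hεf]
      have h1 : (Pi.single i (1 : ZMod 2) : Fin α → ZMod 2)
          + (Pi.single i (1 : ZMod 2) : Fin α → ZMod 2) = 0 := by
        rw [← Pi.single_add, show (1 : ZMod 2) + 1 = 0 from by decide]
        exact Pi.single_zero i
      exact Prod.ext h1 (add_zero 0)
    have h20 : (2 : ZMod 4) * φ (εf i) = 0 := by
      have h1 : φ (εf i + εf i) = 0 := by rw [h2ε, map_zero]
      rw [map_add] at h1
      rw [two_mul]
      exact h1
    revert h20
    generalize φ (εf i) = s
    revert s
    decide
  refine ⟨(fun i => if φ (εf i) = 2 then (1 : ZMod 2) else 0, fun j => φ (ff j)), ?_⟩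
  intro x
  -- decompose x
  have hdec : x = ∑ i, (x.1 i).val • εf i + ∑ j, (x.2 j).val • ff j := by
    refine Prod.ext ?_ ?_
    · rw [Prod.fst_add, Prod.fst_sum, Prod.fst_sum]
      simp only [Prod.smul_fst, hεf, hff, smul_zero, Finset.sum_const_zero, add_zero]
      rw [show (∑ i, (x.1 i).val • Pi.single i (1 : ZMod 2)) = ∑ i, Pi.single i (x.1 i) from
        Finset.sum_congr rfl fun i _ => by
          rw [← Pi.single_smul, nsmul_eq_mul, mul_one, ZMod.natCast_rightInverse]]
      exact (Finset.univ_sum_single x.1).symm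
    · rw [Prod.snd_add, Prod.snd_sum, Prod.snd_sum]
      simp only [Prod.smul_snd, hεf, hff, smul_zero, Finset.sum_const_zero, zero_add]
      rw [show (∑ j, (x.2 j).val • Pi.single j (1 : ZMod 4)) = ∑ j, Pi.single j (x.2 j) from
        Finset.sum_congr rfl fun j _ => by
          rw [← Pi.single_smul, nsmul_eq_mul, mul_one, ZMod.natCast_rightInverse]]
      exact (Finset.univ_sum_single x.2).symm
  have hφx : φ x = ∑ i, (x.1 i).val • φ (εf i) + ∑ j, (x.2 j).val • φ (ff j) := by
    conv_lhs => rw [hdec]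
    rw [map_add, map_sum, map_sum]
    simp only [map_nsmul]
  rw [hφx]
  show 2 * (∑ i, ((x.1 i).val : ZMod 4) * (((if φ (εf i) = 2 then (1 : ZMod 2) else 0)).val : ZMod 4))
      + ∑ j, x.2 j * φ (ff j) = _
  rw [Finset.mul_sum]
  congr 1
  · refine Finset.sum_congr rfl fun i _ => ?_
    rcases hφε2 i with h0 | h2
    · rw [h0, if_neg (by decide : ¬(0 : ZMod 4) = 2), smul_zero]
      simp
    · rw [if_pos h2, h2]
      have hv : (x.1 i).val = 0 ∨ (x.1 i).val = 1 := by
        have := ZMod.val_lt (x.1 i)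
        omega
      rcases hv with hv | hv <;> rw [hv] <;> decide
  · refine Finset.sum_congr rfl fun j _ => ?_
    rw [nsmul_eq_mul, ZMod.natCast_rightInverse]

lemma star2_mem {α β : ℕ} (C : AddSubgroup (Amb α β))
    (h : Phi '' zdual (C : Set (Amb α β)) = bdual (Phi '' (C : Set (Amb α β))))
    {u v : Amb α β} (hu : u ∈ C) (hv : v ∈ C) : star2 u v ∈ C := by
  by_contra he
  obtain ⟨φ, hφC, hφe⟩ := exists_sep C he
  obtain ⟨w, hw⟩ := zrepr φ
  have hwdual : w ∈ zdual (C : Set (Amb α β)) := fun x hx => (hw x).trans (hφC x hx)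
  have hPw : Phi w ∈ bdual (Phi '' (C : Set (Amb α β))) := by
    rw [← h]; exact ⟨w, hwdual, rfl⟩
  have b1 : binner (Phi u) (Phi w) = 0 := hPw _ ⟨u, hu, rfl⟩
  have b2 : binner (Phi v) (Phi w) = 0 := hPw _ ⟨v, hv, rfl⟩
  have b3 : binner (Phi (u + v)) (Phi w) = 0 := hPw _ ⟨u + v, C.add_mem hu hv, rfl⟩
  have hbe : binner (Phi (star2 u v)) (Phi w) = 0 := by
    have h4 : binner (Phi (u + v)) (Phi w) + binner (Phi (star2 u v)) (Phi w)
        = binner (Phi u) (Phi w) + binner (Phi v) (Phi w) := by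
      rw [← binner_add_left, ← binner_add_left, Phi_sum_eq]
    rw [b1, b2, b3, zero_add, add_zero] at h4
    exact h4
  have hz : zinner w (star2 u v) = 0 := by
    rw [zinner_star2, hbe, map_zero]
  have hz' : zinner (star2 u v) w = 0 := by rw [zinner_comm]; exact hz
  exact hφe ((hw _).symm.trans hz')


/-- If `Φ(C⊥) = Φ(C)⊥`, then `Φ(C)` is linear. -/
theorem stmt12 {α β : ℕ} (C : AddSubgroup (Amb α β))
    (h : Phi '' zdual (C : Set (Amb α β)) = bdual (Phi '' (C : Set (Amb α β)))) :
    IsLinear (Phi '' (C : Set (Amb α β))) := by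
  classical
  refine ⟨{ carrier := Phi '' (C : Set (Amb α β)),
            add_mem' := ?_, zero_mem' := ⟨0, C.zero_mem, Phi_zero⟩,
            smul_mem' := ?_ }, rfl⟩
  · rintro a b ⟨x, hx, rfl⟩ ⟨y, hy, rfl⟩
    exact ⟨x + y + star2 x y,
      C.add_mem (C.add_mem hx hy) (star2_mem C h hx hy), Phi_add x y⟩
  · intro c x hx
    rcases (show ∀ c : ZMod 2, c = 0 ∨ c = 1 from by decide) c with rfl | rfl
    · rw [zero_smul]
      exact ⟨0, C.zero_mem, Phi_zero⟩
    · rw [one_smul]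
      exact hx
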